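/- For any C¹⁺ᵇᵛ diffeomorphism f of [0,1] fixing only the endpoints, dist_∞(f) ≥ |log Df(0)| + |log Df(1)|. -/

import Mathlib

open Filter Set Topology

/-- Total variation of `log` of the derivative on `[0,1]`. -/
noncomputable def varLogD (f : ℝ → ℝ) : ℝ :=
  (eVariationOn (fun x => Real.log (deriv f x)) (Icc (0 : ℝ) 1)).toReal

lemma evar_add_le (f g : ℝ → ℝ) (s : Set ℝ) :
    eVariationOn (fun x => f x + g x) s ≤ eVariationOn f s + eVariationOn g s := by
  refine iSup_le ?_
  rintro ⟨n, ⟨u, hu, us⟩⟩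
  calc ∑ i ∈ Finset.range n, edist (f (u (i+1)) + g (u (i+1))) (f (u i) + g (u i))
      ≤ ∑ i ∈ Finset.range n,
          (edist (f (u (i+1))) (f (u i)) + edist (g (u (i+1))) (g (u i))) :=
        Finset.sum_le_sum fun i _ => edist_add_add_le _ _ _ _
    _ = (∑ i ∈ Finset.range n, edist (f (u (i+1))) (f (u i))) +
          ∑ i ∈ Finset.range n, edist (g (u (i+1))) (g (u i)) := Finset.sum_add_distrib
    _ ≤ eVariationOn f s + eVariationOn g s :=
        add_le_add (eVariationOn.sum_le (f := f) (n := n) hu us) (eVariationOn.sum_le (f := g) (n := n) hu us)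

lemma evar_sum_le (F : ℕ → ℝ → ℝ) (s : Set ℝ) (n : ℕ) :
    eVariationOn (fun x => ∑ k ∈ Finset.range n, F k x) s ≤
      ∑ k ∈ Finset.range n, eVariationOn (F k) s := by
  induction n with
  | zero =>
      simp only [Finset.range_zero, Finset.sum_empty]
      exact le_of_eq (eVariationOn.constant_on (by
        rintro x ⟨a, _, rfl⟩ y ⟨b, _, rfl⟩; rfl))
  | succ n ih =>
      simp only [Finset.sum_range_succ]
      exact le_trans (evar_add_le _ _ _) (add_le_add ih le_rfl)

lemma hasDerivAt_iterate (f : ℝ → ℝ) (hd : Differentiable ℝ f) (n : ℕ) (x : ℝ) :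
    HasDerivAt (f^[n]) (∏ k ∈ Finset.range n, deriv f (f^[k] x)) x := by
  induction n with
  | zero => simpa using hasDerivAt_id x
  | succ n ih =>
      rw [Function.iterate_succ']
      have h1 : HasDerivAt f (deriv f (f^[n] x)) (f^[n] x) := (hd _).hasDerivAt
      have h2 := h1.comp x ih
      rw [Finset.prod_range_succ]
      rw [mul_comm]
      exact h2

/-- For a C¹⁺ᵇᵛ diffeomorphism `f` of `[0,1]` fixing only the endpoints,
`dist_∞(f) ≥ |log Df(0)| + |log Df(1)|`. -/
theorem stmt_15 (f : ℝ → ℝ) (hd : Differentiable ℝ f)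
    (h0 : f 0 = 0) (h1 : f 1 = 1)
    (hmaps : MapsTo f (Icc (0 : ℝ) 1) (Icc (0 : ℝ) 1))
    (hpos : ∀ x ∈ Icc (0 : ℝ) 1, 0 < deriv f x)
    (hfix : ∀ x ∈ Ioo (0 : ℝ) 1, f x ≠ x)
    (hbv : BoundedVariationOn (fun x => Real.log (deriv f x)) (Icc (0 : ℝ) 1))
    (d : ℝ)
    (hdist : Tendsto (fun n : ℕ => varLogD (f^[n]) / n) atTop (nhds d)) :
    |Real.log (deriv f 0)| + |Real.log (deriv f 1)| ≤ d := by
  set a := Real.log (deriv f 0) with ha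
  set b := Real.log (deriv f 1) with hb
  set c := |a| + |b| with hc
  -- monotonicity of f on [0,1]
  have hmono : MonotoneOn f (Icc (0:ℝ) 1) := by
    have := strictMonoOn_of_deriv_pos (convex_Icc (0:ℝ) 1)
      hd.continuous.continuousOn (fun x hx => by
        rw [interior_Icc] at hx
        exact hpos x ⟨hx.1.le, hx.2.le⟩)
    exact this.monotoneOn
  -- iterates map [0,1] to itself and are monotone on it
  have hmapsk : ∀ k : ℕ, MapsTo (f^[k]) (Icc (0:ℝ) 1) (Icc (0:ℝ) 1) := by
    intro k
    induction k with
    | zero => simpa using mapsTo_id _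
    | succ k ih =>
        rw [Function.iterate_succ]
        exact ih.comp hmaps |>.mono (le_refl _) (le_refl _) |>.mono subset_rfl subset_rfl
          |>.mono subset_rfl subset_rfl
  have hmonok : ∀ k : ℕ, MonotoneOn (f^[k]) (Icc (0:ℝ) 1) := by
    intro k
    induction k with
    | zero => intro x _ y _ h; simpa using h
    | succ k ih =>
        rw [Function.iterate_succ']
        intro x hx y hy hxy
        exact hmono (hmapsk k hx) (hmapsk k hy) (ih hx hy hxy)
  -- the chain rule formula
  have hderiv : ∀ (n : ℕ) (x : ℝ),
      deriv (f^[n]) x = ∏ k ∈ Finset.range n, deriv f (f^[k] x) :=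
    fun n x => (hasDerivAt_iterate f hd n x).deriv
  -- endpoint fixed points
  have hit0 : ∀ k : ℕ, f^[k] 0 = 0 := fun k => Function.iterate_fixed h0 k
  have hit1 : ∀ k : ℕ, f^[k] 1 = 1 := fun k => Function.iterate_fixed h1 k
  have hd0 : ∀ n : ℕ, deriv (f^[n]) 0 = (deriv f 0) ^ n := by
    intro n; rw [hderiv]
    simp [hit0]
  have hd1 : ∀ n : ℕ, deriv (f^[n]) 1 = (deriv f 1) ^ n := by
    intro n; rw [hderiv]
    simp [hit1]
  have h01 : (0:ℝ) ∈ Icc (0:ℝ) 1 := ⟨le_refl 0, zero_le_one⟩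
  have h11 : (1:ℝ) ∈ Icc (0:ℝ) 1 := ⟨zero_le_one, le_refl 1⟩
  -- bounded variation of the iterates
  have hbvn : ∀ n : ℕ,
      eVariationOn (fun x => Real.log (deriv (f^[n]) x)) (Icc (0:ℝ) 1) ≠ ⊤ := by
    intro n
    have heq : EqOn (fun x => Real.log (deriv (f^[n]) x))
        (fun x => ∑ k ∈ Finset.range n, Real.log (deriv f (f^[k] x))) (Icc (0:ℝ) 1) := by
      intro x hx
      simp only [hderiv n x]
      exact Real.log_prod fun k _ => (hpos _ (hmapsk k hx)).ne'
    rw [eVariationOn.eq_of_eqOn heq]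
    refine ne_top_of_le_ne_top ?_ (evar_sum_le (fun k x => Real.log (deriv f (f^[k] x))) _ n)
    have hterm : ∀ k ∈ Finset.range n,
        eVariationOn (fun x => Real.log (deriv f (f^[k] x))) (Icc (0:ℝ) 1) ≤
        eVariationOn (fun x => Real.log (deriv f x)) (Icc (0:ℝ) 1) := fun k _ =>
      eVariationOn.comp_le_of_monotoneOn _ (f^[k]) (hmonok k) (hmapsk k)
    refine ne_top_of_le_ne_top ?_ (Finset.sum_le_sum hterm)
    simp only [Finset.sum_const, Finset.card_range, nsmul_eq_mul]
    exact ENNReal.mul_ne_top (ENNReal.natCast_ne_top n) hbv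
  -- lower bound for the variation of an iterate
  have hlow : ∀ n : ℕ, |Real.log (deriv (f^[n]) 1) - Real.log (deriv (f^[n]) 0)| ≤
      varLogD (f^[n]) := by
    intro n
    have := eVariationOn.edist_le (fun x => Real.log (deriv (f^[n]) x)) h11 h01
    have h2 := ENNReal.toReal_mono (hbvn n) this
    rw [edist_dist, ENNReal.toReal_ofReal dist_nonneg] at h2
    simpa [Real.dist_eq, varLogD] using h2
  -- sign dichotomy: f x > x on (0,1) or f x < x on (0,1)
  have hsign : (∀ x ∈ Ioo (0:ℝ) 1, x < f x) ∨ (∀ x ∈ Ioo (0:ℝ) 1, f x < x) := by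
    by_contra h
    push_neg at h
    obtain ⟨⟨x, hx, hfx⟩, ⟨y, hy, hfy⟩⟩ := h
    have hfx' : f x < x := lt_of_le_of_ne hfx (hfix x hx)
    have hfy' : y < f y := lt_of_le_of_ne hfy (Ne.symm (hfix y hy))
    have hcont : ContinuousOn (fun t => f t - t) (uIcc x y) :=
      (hd.continuous.sub continuous_id).continuousOn
    have hmem : (0:ℝ) ∈ uIcc (f x - x) (f y - y) := by
      rw [mem_uIcc]
      left
      constructor <;> linarith
    have := intermediate_value_uIcc hcont hmem
    obtain ⟨z, hz, hz0⟩ := this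
    have hzI : z ∈ Ioo (0:ℝ) 1 := Set.ordConnected_Ioo.uIcc_subset hx hy hz
    exact hfix z hzI (by linarith [sub_eq_zero.mp hz0])
  -- derivative comparison at the endpoints via slopes
  have hslope0 : Tendsto (slope f 0) (𝓝[>] (0:ℝ)) (𝓝 (deriv f 0)) :=
    (hasDerivAt_iff_tendsto_slope.mp (hd 0).hasDerivAt).mono_left
      (nhdsWithin_mono 0 fun x hx => ne_of_gt hx)
  have hslope1 : Tendsto (slope f 1) (𝓝[<] (1:ℝ)) (𝓝 (deriv f 1)) :=
    (hasDerivAt_iff_tendsto_slope.mp (hd 1).hasDerivAt).mono_left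
      (nhdsWithin_mono 1 fun x hx => ne_of_lt hx)
  have hIoo0 : Ioo (0:ℝ) 1 ∈ 𝓝[>] (0:ℝ) :=
    Ioo_mem_nhdsGT_of_mem ⟨le_refl 0, zero_lt_one⟩
  have hIoo1 : Ioo (0:ℝ) 1 ∈ 𝓝[<] (1:ℝ) :=
    Ioo_mem_nhdsLT_of_mem ⟨zero_lt_one, le_refl 1⟩
  -- the key sign fact: a and b have opposite signs
  have hkey : |b - a| = c := by
    rcases hsign with hup | hdown
    · have ha0 : (0:ℝ) ≤ a := by
        have hge : (1:ℝ) ≤ deriv f 0 := by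
          refine ge_of_tendsto hslope0 (mem_of_superset hIoo0 fun x hx => ?_)
          have hx0 : (0:ℝ) < x := hx.1
          have : x ≤ f x := (hup x hx).le
          show (1:ℝ) ≤ slope f 0 x
          rw [slope_def_field, h0, sub_zero, sub_zero, le_div_iff₀ hx0]
          linarith
        exact Real.log_nonneg hge
      have hb0 : b ≤ 0 := by
        have hle : deriv f 1 ≤ 1 := by
          refine le_of_tendsto hslope1 (mem_of_superset hIoo1 fun x hx => ?_)
          have hx1 : x - 1 < 0 := by linarith [hx.2]
          have : x ≤ f x := (hup x hx).le
          show slope f 1 x ≤ 1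
          rw [slope_def_field, h1, div_le_one_iff]
          right; right
          exact ⟨by linarith, by linarith⟩
        exact Real.log_nonpos (le_of_lt (hpos 1 h11)) hle
      rw [hc, abs_of_nonneg ha0, abs_of_nonpos hb0, abs_of_nonpos (by linarith : b - a ≤ 0)]
      ring
    · have ha0 : a ≤ 0 := by
        have hle : deriv f 0 ≤ 1 := by
          refine le_of_tendsto hslope0 (mem_of_superset hIoo0 fun x hx => ?_)
          have hx0 : (0:ℝ) < x := hx.1
          have : f x ≤ x := (hdown x hx).le
          show slope f 0 x ≤ 1
          rw [slope_def_field, h0, sub_zero, sub_zero, div_le_one hx0]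
          linarith
        exact Real.log_nonpos (le_of_lt (hpos 0 h01)) hle
      have hb0 : (0:ℝ) ≤ b := by
        have hge : (1:ℝ) ≤ deriv f 1 := by
          refine ge_of_tendsto hslope1 (mem_of_superset hIoo1 fun x hx => ?_)
          have hx1 : x - 1 < 0 := by linarith [hx.2]
          have : f x ≤ x := (hdown x hx).le
          show (1:ℝ) ≤ slope f 1 x
          rw [slope_def_field, h1, le_div_iff_of_neg hx1]
          linarith
        exact Real.log_nonneg hge
      rw [hc, abs_of_nonpos ha0, abs_of_nonneg hb0, abs_of_nonneg (by linarith : 0 ≤ b - a)]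
      ring
  -- main estimate: for n ≥ 1, c ≤ varLogD (f^[n]) / n
  refine ge_of_tendsto hdist ?_
  rw [eventually_atTop]
  refine ⟨1, fun n hn => ?_⟩
  have hnc : (n:ℝ) * c ≤ varLogD (f^[n]) := by
    have := hlow n
    rw [hd0 n, hd1 n, Real.log_pow, Real.log_pow, ← hb, ← ha] at this
    calc (n:ℝ) * c = |(n:ℝ) * b - (n:ℝ) * a| := by
          rw [← mul_sub, abs_mul, abs_of_nonneg (by positivity : (0:ℝ) ≤ (n:ℝ)), hkey]
      _ ≤ varLogD (f^[n]) := by simpa using this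
  have hnpos : (0:ℝ) < (n:ℝ) := by exact_mod_cast hn
  rw [le_div_iff₀ hnpos]
  linarith [hnc]
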